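/- Let 𝒪 be a maximal order in a definite quaternion algebra A over ℚ, and for α ∈ A let I_α = 𝒪α + 𝒪 and f_α(u,v) = n(u - αv)/n(I_α). Then for every g = [[a,b],[c,d]] ∈ SL₂(A) and α = xy⁻¹ with x, y ∈ A, one has f_{g·α} ∘ g = (n(𝒪x + 𝒪y) / n(𝒪(ax+by) + 𝒪(cx+dy))) · f_α. In particular f_{g·α} ∘ g = f_α when g ∈ SL₂(𝒪). -/

import Mathlib

open Quaternion

noncomputable section

/-- `A` is a definite quaternion algebra over ℚ, realized as a ℚ-subalgebra of
Hamilton's quaternions: it has dimension 4 over ℚ and spans ℍ over ℝ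
(i.e. `A ⊗_ℚ ℝ = ℍ`). -/
def IsDefiniteQuatAlg (A : Subalgebra ℚ (Quaternion ℝ)) : Prop :=
  Module.finrank ℚ A = 4 ∧ Submodule.span ℝ (A : Set (Quaternion ℝ)) = ⊤

/-- `O` is an order in `A`: a unitary subring of `A` which is a finitely
generated ℤ-module generating `A` as a ℚ-vector space. -/
def IsOrder (A : Subalgebra ℚ (Quaternion ℝ)) (O : Subring (Quaternion ℝ)) : Prop :=
  (O : Set (Quaternion ℝ)) ⊆ (A : Set (Quaternion ℝ)) ∧
  (∃ s : Finset (Quaternion ℝ), AddSubgroup.closure (s : Set (Quaternion ℝ)) = O.toAddSubgroup) ∧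
  Submodule.span ℚ (O : Set (Quaternion ℝ)) = Subalgebra.toSubmodule A

/-- `O` is a maximal order in `A`. -/
def IsMaximalOrder (A : Subalgebra ℚ (Quaternion ℝ)) (O : Subring (Quaternion ℝ)) : Prop :=
  IsOrder A O ∧ ∀ O' : Subring (Quaternion ℝ), IsOrder A O' → O ≤ O' → O' = O

/-- The left fractional ideal `O x + O y` of `O`, as a subset of ℍ. -/
def idSet (O : Subring (Quaternion ℝ)) (x y : Quaternion ℝ) : Set (Quaternion ℝ) :=
  {m | ∃ o₁ ∈ O, ∃ o₂ ∈ O, m = o₁ * x + o₂ * y}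

/-- The reduced norm of a (fractional) left ideal of `O`, given as a subset of
ℍ: the greatest common divisor of the reduced norms of its elements, i.e. the
largest positive real `t` such that every `n(m)`, `m ∈ s`, is an integer
multiple of `t`. -/
def idealNorm (s : Set (Quaternion ℝ)) : ℝ :=
  sSup {t : ℝ | 0 < t ∧ ∀ m ∈ s, ∃ k : ℤ, normSq m = t * k}

/-!
Put `w = cα + d`. Since `(g·α) w = aα + b`, the form `(au + bv) - (g·α)(cu + dv)` factors as
`(a - (g·α) c)(u - αv)`, and clearing `w⁻¹ = w̄ / n(w)` turns `n(a - (g·α) c) n(w)` into a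
polynomial in the coordinates, the Study determinant of `g`, which is `1`. On the ideal side,
right multiplication by `q` multiplies the reduced norm by `n(q)`, so `n(Ox + Oy) = n(y) n(I_α)`
and `n(O(ax + by) + O(cx + dy)) = n(y) n(w) n(I_{g·α})`; the factors `n(w)` cancel.

The reduced norm is a supremum, equal to `0` when no common divisor of the norms exists. As
`α ∈ A` has a nonzero integer multiple in `O`, `n(I_α)` is positive as soon as `n(I_{g·α})` is
nonzero; and if `n(I_{g·α}) = 0`, both sides are `0` because of division by zero.
-/

open Pointwise

namespace Quaternion

variable {R : Type*}

/-- The Study determinant of `!![a, b; c, d]`; `SL₂(ℍ)` is the set where it equals `1`. -/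
def studyDet [CommRing R] (a b c d : ℍ[R]) : R :=
  normSq (a * d) + normSq (b * c) - 2 * (a * star c * d * star b).re

theorem studyDet_eq_of_homography [CommRing R] (a b c d α : ℍ[R]) :
    normSq (c * α + d) * normSq a + normSq (a * α + b) * normSq c
      - 2 * (a * (star c * (c * α + d) * star (a * α + b))).re = studyDet a b c d := by
  simp only [studyDet, normSq_def', re_mul, imI_mul, imJ_mul, imK_mul, re_add, imI_add,
    imJ_add, imK_add, re_star, imI_star, imJ_star, imK_star]
  ring

theorem normSq_sub [CommRing R] (p q : ℍ[R]) :
    normSq (p - q) = normSq p + normSq q - 2 * (p * star q).re := by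
  rw [sub_eq_add_neg, normSq_add, normSq_neg, star_neg, mul_neg, re_neg]
  ring

theorem normSq_sub_homography_mul_mul_normSq_eq_studyDet [Field R] [LinearOrder R]
    [IsStrictOrderedRing R] (a b c d α : ℍ[R]) (hw : c * α + d ≠ 0) :
    normSq (a - (a * α + b) * (c * α + d)⁻¹ * c) * normSq (c * α + d) = studyDet a b c d := by
  have hnw : normSq (c * α + d) ≠ 0 := normSq_ne_zero.2 hw
  -- `n(w) w⁻¹ = w̄` clears the inverse from `n(w) (a - z w⁻¹ c)`.
  have hclear : normSq (c * α + d) • (a - (a * α + b) * (c * α + d)⁻¹ * c)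
      = normSq (c * α + d) • a - (a * α + b) * (star (c * α + d) * c) := by
    rw [smul_sub, inv_def, mul_smul_comm, smul_mul_assoc, smul_smul, mul_inv_cancel₀ hnw,
      one_smul, mul_assoc]
  calc normSq (a - (a * α + b) * (c * α + d)⁻¹ * c) * normSq (c * α + d)
      = normSq (normSq (c * α + d) • (a - (a * α + b) * (c * α + d)⁻¹ * c))
          / normSq (c * α + d) := by
        rw [normSq_smul]; field_simp
    _ = normSq (c * α + d) * normSq a + normSq (a * α + b) * normSq c
          - 2 * (a * (star c * (c * α + d) * star (a * α + b))).re := by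
        rw [hclear, normSq_sub, normSq_smul, map_mul, map_mul, normSq_star, star_mul, star_mul,
          star_star, smul_mul_assoc, re_smul, smul_eq_mul]
        field_simp
    _ = studyDet a b c d := studyDet_eq_of_homography a b c d α

end Quaternion

theorem sub_homography_mul_eq_mul_sub {R : Type*} [Ring R] {a b c d α β : R}
    (hβ : β * (c * α + d) = a * α + b) (u v : R) :
    a * u + b * v - β * (c * u + d * v) = (a - β * c) * (u - α * v) := by
  have h : a * u + b * v - β * (c * u + d * v) - (a - β * c) * (u - α * v)
      = (a * α + b - β * (c * α + d)) * v := by noncomm_ring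
  rwa [hβ, sub_self, zero_mul, sub_eq_zero] at h

def normDivisors (s : Set ℍ[ℝ]) : Set ℝ :=
  {t : ℝ | 0 < t ∧ ∀ m ∈ s, ∃ k : ℤ, normSq m = t * k}

theorem idealNorm_eq_sSup_normDivisors (s : Set ℍ[ℝ]) : idealNorm s = sSup (normDivisors s) :=
  rfl

theorem normDivisors_anti {s s' : Set ℍ[ℝ]} (h : s ⊆ s') : normDivisors s' ⊆ normDivisors s :=
  fun _ ⟨ht, hdiv⟩ => ⟨ht, fun m hm => hdiv m (h hm)⟩

theorem normDivisors_image_mul_right (s : Set ℍ[ℝ]) {q : ℍ[ℝ]} (hq : q ≠ 0) :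
    normDivisors ((· * q) '' s) = normSq q • normDivisors s := by
  have hnq : 0 < normSq q := normSq_nonneg.lt_of_ne' (normSq_ne_zero.2 hq)
  ext t
  rw [Set.mem_smul_set]
  constructor
  · rintro ⟨ht, hdiv⟩
    refine ⟨t / normSq q, ⟨div_pos ht hnq, fun m hm => ?_⟩, by simp [field]⟩
    obtain ⟨k, hk⟩ := hdiv (m * q) ⟨m, hm, rfl⟩
    refine ⟨k, ?_⟩
    rw [map_mul] at hk
    field_simp
    linarith
  · rintro ⟨t, ⟨ht, hdiv⟩, rfl⟩
    refine ⟨mul_pos hnq ht, ?_⟩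
    rintro _ ⟨m, hm, rfl⟩
    obtain ⟨k, hk⟩ := hdiv m hm
    exact ⟨k, by rw [map_mul, hk, smul_eq_mul]; ring⟩

theorem idSet_mul_right (O : Subring ℍ[ℝ]) (p r q : ℍ[ℝ]) :
    idSet O (p * q) (r * q) = (· * q) '' idSet O p r := by
  ext m
  constructor
  · rintro ⟨o₁, h₁, o₂, h₂, rfl⟩
    exact ⟨o₁ * p + o₂ * r, ⟨o₁, h₁, o₂, h₂, rfl⟩, by noncomm_ring⟩
  · rintro ⟨_, ⟨o₁, h₁, o₂, h₂, rfl⟩, rfl⟩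
    exact ⟨o₁, h₁, o₂, h₂, by noncomm_ring⟩

theorem idealNorm_idSet_mul_right (O : Subring ℍ[ℝ]) (p r : ℍ[ℝ]) {q : ℍ[ℝ]} (hq : q ≠ 0) :
    idealNorm (idSet O (p * q) (r * q)) = normSq q * idealNorm (idSet O p r) := by
  rw [idealNorm_eq_sSup_normDivisors, idealNorm_eq_sSup_normDivisors, idSet_mul_right,
    normDivisors_image_mul_right _ hq, Real.sSup_smul_of_nonneg normSq_nonneg, smul_eq_mul]

theorem normDivisors_nonempty_of_idealNorm_ne_zero {s : Set ℍ[ℝ]} (h : idealNorm s ≠ 0) :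
    (normDivisors s).Nonempty := by
  rw [Set.nonempty_iff_ne_empty]
  intro hempty
  rw [idealNorm_eq_sSup_normDivisors, hempty, Real.sSup_empty] at h
  exact h rfl

/-- Since `n(1) = 1`, every element of `normDivisors s` is at most `1` when `1 ∈ s`. -/
theorem idealNorm_pos {s : Set ℍ[ℝ]} (h1 : 1 ∈ s) (hs : (normDivisors s).Nonempty) :
    0 < idealNorm s := by
  have hbdd : BddAbove (normDivisors s) := by
    refine ⟨1, fun t ⟨ht, hdiv⟩ => ?_⟩
    obtain ⟨k, hk⟩ := hdiv 1 h1
    rw [map_one] at hk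
    have hk1 : (1 : ℝ) ≤ k := by
      have : (0 : ℝ) < k := pos_of_mul_pos_right (hk ▸ one_pos) ht.le
      exact_mod_cast (Int.cast_pos.1 this : (0 : ℤ) < k)
    nlinarith
  obtain ⟨t, ht⟩ := hs
  exact ht.1.trans_le (le_csSup hbdd ht)

theorem Subring.exists_zsmul_mem_of_mem_span_rat {D : Type*} [Ring D] [Module ℚ D]
    (O : Subring D) {q : D} (hq : q ∈ Submodule.span ℚ (O : Set D)) :
    ∃ k : ℤ, k ≠ 0 ∧ k • q ∈ O := by
  obtain ⟨⟨k, hk⟩, hkq⟩ :=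
    multiple_mem_span_of_mem_localization_span (nonZeroDivisors ℤ) ℚ _ q hq
  refine ⟨k, nonZeroDivisors.ne_zero hk, ?_⟩
  exact (Submodule.span_le (p := O.toAddSubgroup.toIntSubmodule)).2 subset_rfl hkq

theorem idealNorm_idSet_one_pos (O : Subring ℍ[ℝ]) {γ : ℍ[ℝ]}
    (hγ : γ ∈ Submodule.span ℚ (O : Set ℍ[ℝ])) (hO : (normDivisors O).Nonempty) :
    0 < idealNorm (idSet O γ 1) := by
  obtain ⟨k, hk, hkγ⟩ := O.exists_zsmul_mem_of_mem_span_rat hγ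
  have : CharZero ℍ[ℝ] := charZero_of_injective_algebraMap (algebraMap ℝ ℍ[ℝ]).injective
  have hk0 : (k : ℍ[ℝ]) ≠ 0 := Int.cast_ne_zero.2 hk
  have hsub : (· * (k : ℍ[ℝ])) '' idSet O γ 1 ⊆ O := by
    rintro _ ⟨_, ⟨o₁, h₁, o₂, h₂, rfl⟩, rfl⟩
    have h : (o₁ * γ + o₂ * 1) * k = o₁ * (k • γ) + o₂ * k := by
      rw [zsmul_eq_mul, Int.cast_comm]
      noncomm_ring
    show (o₁ * γ + o₂ * 1) * k ∈ O
    rw [h]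
    exact O.add_mem (O.mul_mem h₁ hkγ) (O.mul_mem h₂ (intCast_mem O k))
  refine idealNorm_pos ⟨0, O.zero_mem, 1, O.one_mem, by simp⟩ ?_
  rw [← Set.smul_set_nonempty (a := normSq (k : ℍ[ℝ])), ← normDivisors_image_mul_right _ hk0]
  exact hO.mono (normDivisors_anti hsub)

theorem normDivisors_subring_nonempty_of_idealNorm_ne_zero {O : Subring ℍ[ℝ]} {γ : ℍ[ℝ]}
    (h : idealNorm (idSet O γ 1) ≠ 0) : (normDivisors O).Nonempty :=
  (normDivisors_nonempty_of_idealNorm_ne_zero h).mono <|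
    normDivisors_anti fun o (ho : o ∈ O) =>
      (⟨0, O.zero_mem, o, ho, by simp⟩ : o ∈ idSet O γ 1)

theorem form_falpha_equivariance_general (A : Subalgebra ℚ (Quaternion ℝ))
    (O : Subring (Quaternion ℝ)) (hA : IsDefiniteQuatAlg A) (hO : IsMaximalOrder A O)
    (a b c d x y α β : Quaternion ℝ)
    (hx : x ∈ A) (hy : y ∈ A)
    (hdet : normSq (a * d) + normSq (b * c) - 2 * (a * star c * d * star b).re = 1)
    (hy0 : y ≠ 0) (hα : α = x * y⁻¹)
    (hden : c * α + d ≠ 0) (hβ : β = (a * α + b) * (c * α + d)⁻¹) :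
    ∀ u v : Quaternion ℝ,
      normSq ((a * u + b * v) - β * (c * u + d * v)) / idealNorm (idSet O β 1)
        = (idealNorm (idSet O x y) / idealNorm (idSet O (a * x + b * y) (c * x + d * y)))
          * (normSq (u - α * v) / idealNorm (idSet O α 1)) := by
  intro u v
  have : FiniteDimensional ℚ A := .of_finrank_pos (by rw [hA.1]; norm_num)
  have hαO : α ∈ Submodule.span ℚ (O : Set ℍ[ℝ]) := by
    rw [hO.1.2.2, hα]
    exact A.mul_mem hx (Algebra.IsIntegral.inv_mem hy)
  have hαy : α * y = x := by rw [hα, inv_mul_cancel_right₀ hy0]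
  have hβw : β * (c * α + d) = a * α + b := by rw [hβ, inv_mul_cancel_right₀ hden]
  have hnormα : idealNorm (idSet O x y) = normSq y * idealNorm (idSet O α 1) := by
    rw [← idealNorm_idSet_mul_right O α 1 hy0, hαy, one_mul]
  have hnormβ : idealNorm (idSet O (a * x + b * y) (c * x + d * y))
      = normSq y * (normSq (c * α + d) * idealNorm (idSet O β 1)) := by
    rw [← idealNorm_idSet_mul_right O β 1 hden, ← idealNorm_idSet_mul_right _ _ _ hy0, hβw,
      ← hαy]
    congr 2 <;> noncomm_ring
  have hfactor : normSq (a - β * c) * normSq (c * α + d) = 1 := by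
    rw [hβ, normSq_sub_homography_mul_mul_normSq_eq_studyDet a b c d α hden]
    exact hdet
  rw [sub_homography_mul_eq_mul_sub hβw, map_mul, hnormα, hnormβ]
  rcases eq_or_ne (idealNorm (idSet O β 1)) 0 with hβ0 | hβ0
  · simp [hβ0]
  have hα0 := idealNorm_idSet_one_pos O hαO
    (normDivisors_subring_nonempty_of_idealNorm_ne_zero hβ0)
  have hy0' : normSq y ≠ 0 := normSq_ne_zero.2 hy0
  have hw0 : normSq (c * α + d) ≠ 0 := normSq_ne_zero.2 hden
  field_simp
  linear_combination normSq (u - α * v) * hfactor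

/-- Proposition 3.2: let `O` be a maximal order in a definite quaternion algebra
`A` over ℚ. For `α ∈ A`, let `I_α = Oα + O` and let `f_α` be the form
`f_α(u,v) = n(u - αv) / n(I_α)`. Then for `g = !![a,b;c,d] ∈ SL₂(A)` and
`α = x y⁻¹` (with `x, y ∈ A`, `y ≠ 0`, and `g·α = (aα+b)(cα+d)⁻¹ ≠ ∞`), one has
`f_{g·α} ∘ g = (n(Ox + Oy) / n(O(ax+by) + O(cx+dy))) · f_α`,
where `g` acts linearly on pairs by `g(u,v) = (au+bv, cu+dv)`. -/
theorem form_falpha_equivariance (A : Subalgebra ℚ (Quaternion ℝ))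
    (O : Subring (Quaternion ℝ)) (hA : IsDefiniteQuatAlg A) (hO : IsMaximalOrder A O)
    (a b c d x y α β : Quaternion ℝ)
    (ha : a ∈ A) (hb : b ∈ A) (hc : c ∈ A) (hd : d ∈ A) (hx : x ∈ A) (hy : y ∈ A)
    (hdet : normSq (a * d) + normSq (b * c) - 2 * (a * star c * d * star b).re = 1)
    (hy0 : y ≠ 0) (hα : α = x * y⁻¹)
    (hden : c * α + d ≠ 0) (hβ : β = (a * α + b) * (c * α + d)⁻¹) :
    ∀ u v : Quaternion ℝ,
      normSq ((a * u + b * v) - β * (c * u + d * v)) / idealNorm (idSet O β 1)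
        = (idealNorm (idSet O x y) / idealNorm (idSet O (a * x + b * y) (c * x + d * y)))
          * (normSq (u - α * v) / idealNorm (idSet O α 1)) :=
  form_falpha_equivariance_general A O hA hO a b c d x y α β hx hy hdet hy0 hα hden hβ
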